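/- arXiv:2206.00939 — 6 statements merged into one kernel-verified Lean document; each statement's English description precedes it below -/
import Mathlib

section
/- Let a, w : ℝ → ℝ × ℝ^d be differentiable functions satisfying a'(t) = ⟨D(t), w(t)⟩ and w'(t) = D(t) · a(t) for some vector-valued function D : ℝ → ℝ^d. Then for all t ≥ 0, a(t)² - ‖w(t)‖² = a(0)² - ‖w(0)‖² (the balancedness invariant). -/
open RealInnerProductSpace

/-! Along the flow, `d/dt a² = 2 a ⟪D, w⟫ = d/dt ‖w‖²`, so `a² - ‖w‖²` has zero derivative
everywhere and is therefore constant. -/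

theorem hasDerivAt_sq_sub_norm_sq_of_balanced_flow {E : Type*} [NormedAddCommGroup E]
    [InnerProductSpace ℝ E] {a : ℝ → ℝ} {w D : ℝ → E} {t : ℝ}
    (ha : HasDerivAt a ⟪D t, w t⟫ t) (hw : HasDerivAt w (a t • D t) t) :
    HasDerivAt (fun s => a s ^ 2 - ‖w s‖ ^ 2) 0 t := by
  refine ((ha.fun_pow 2).fun_sub hw.norm_sq).congr_deriv ?_
  rw [real_inner_smul_right, real_inner_comm]
  ring

/-- Balancedness invariant: if `a' = ⟪D, w⟫` and `w' = a • D`, then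
`a(t)² - ‖w(t)‖²` is conserved. -/
theorem balancedness_invariant {d : ℕ}
    (a : ℝ → ℝ) (w : ℝ → EuclideanSpace ℝ (Fin d))
    (D : ℝ → EuclideanSpace ℝ (Fin d))
    (ha : ∀ t, HasDerivAt a (⟪D t, w t⟫) t)
    (hw : ∀ t, HasDerivAt w (a t • D t) t) :
    ∀ t ≥ (0 : ℝ), (a t) ^ 2 - ‖w t‖ ^ 2 = (a 0) ^ 2 - ‖w 0‖ ^ 2 := by
  have hderiv t := hasDerivAt_sq_sub_norm_sq_of_balanced_flow (ha t) (hw t)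
  exact fun t _ => is_const_of_deriv_eq_zero (fun s => (hderiv s).differentiableAt)
    (fun s => (hderiv s).deriv) t 0
end

section
/- Let a, w be differentiable functions satisfying a'(t) = ⟨D(t), w(t)⟩ and w'(t) = D(t) a(t). If |a(0)| = ‖w(0)‖ > 0 and a(0) > 0, then for all t ≥ 0, a(t) = ‖w(t)‖ > 0. -/
/-!
The quantity `a² - ‖w‖²` is conserved along the flow, so the balanced initialisation gives
`|a| = ‖w‖` for all time. Then `(a²)' = 2a⟪D, w⟫ ≥ -2‖D‖a²`, and a Grönwall-type lower bound
`a(t)² ≥ a(0)² e^{-2Ct}` (with `C` bounding `‖D‖` on `[0, t]`) keeps `a` away from zero, so `a`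
cannot change sign.
-/

open RealInnerProductSpace Set

theorem mul_exp_le_mul_exp_of_neg_mul_le_deriv {f f' : ℝ → ℝ} {K a b : ℝ} (hab : a ≤ b)
    (hf : ∀ s ∈ Icc a b, HasDerivAt f (f' s) s) (hf' : ∀ s ∈ Icc a b, -(K * f s) ≤ f' s) :
    f a * Real.exp (K * a) ≤ f b * Real.exp (K * b) := by
  have hderiv : ∀ s ∈ Icc a b, HasDerivAt (fun s => f s * Real.exp (K * s))
      (Real.exp (K * s) * (f' s + K * f s)) s := by
    intro s hs
    refine ((hf s hs).mul ((hasDerivAt_id s).const_mul K).exp).congr_deriv ?_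
    simp only [id, mul_one]
    ring
  have hmono : MonotoneOn (fun s => f s * Real.exp (K * s)) (Icc a b) := by
    refine monotoneOn_of_hasDerivWithinAt_nonneg (convex_Icc a b)
      (fun s hs => (hderiv s hs).continuousAt.continuousWithinAt)
      (fun s hs => (hderiv s (interior_subset hs)).hasDerivWithinAt) fun s hs => ?_
    have := hf' s (interior_subset hs)
    have := Real.exp_pos (K * s)
    nlinarith
  exact hmono ⟨le_rfl, hab⟩ ⟨hab, le_rfl⟩ hab

section InnerProductSpace

variable {E : Type*} [NormedAddCommGroup E] [InnerProductSpace ℝ E]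

theorem neg_mul_sq_le_mul_inner {x C : ℝ} {u v : E} (hxv : |x| = ‖v‖) (hu : ‖u‖ ≤ C) :
    -(C * x ^ 2) ≤ x * ⟪u, v⟫ := by
  have : |x * ⟪u, v⟫| ≤ C * x ^ 2 :=
    calc |x * ⟪u, v⟫| = |x| * |⟪u, v⟫| := abs_mul _ _
      _ ≤ |x| * (‖u‖ * ‖v‖) := by gcongr; exact abs_real_inner_le_norm u v
      _ ≤ |x| * (C * |x|) := by rw [hxv]; gcongr
      _ = C * x ^ 2 := by rw [mul_left_comm, ← sq, sq_abs]
  exact (neg_le_neg this).trans (neg_abs_le _)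

variable {a : ℝ → ℝ} {w D : ℝ → E}

theorem sq_sub_norm_sq_eq (ha : ∀ t, HasDerivAt a ⟪D t, w t⟫ t)
    (hw : ∀ t, HasDerivAt w (a t • D t) t) (t s : ℝ) :
    a t ^ 2 - ‖w t‖ ^ 2 = a s ^ 2 - ‖w s‖ ^ 2 := by
  have hderiv : ∀ t, HasDerivAt (fun t => a t ^ 2 - ‖w t‖ ^ 2) 0 t := by
    intro t
    refine (((ha t).fun_pow 2).sub (hw t).norm_sq).congr_deriv ?_
    rw [real_inner_smul_right, real_inner_comm]
    ring
  exact is_const_of_deriv_eq_zero (fun t => (hderiv t).differentiableAt)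
    (fun t => (hderiv t).deriv) t s

theorem abs_eq_norm_of_abs_eq_norm (ha : ∀ t, HasDerivAt a ⟪D t, w t⟫ t)
    (hw : ∀ t, HasDerivAt w (a t • D t) t) {s : ℝ} (hs : |a s| = ‖w s‖) (t : ℝ) :
    |a t| = ‖w t‖ := by
  have h := sq_sub_norm_sq_eq ha hw t s
  rw [← sq_abs (a s), hs, sub_self, sub_eq_zero, ← sq_abs] at h
  exact (sq_eq_sq₀ (abs_nonneg _) (norm_nonneg _)).mp h

theorem ne_zero_of_abs_eq_norm (hD : Continuous D) (ha : ∀ t, HasDerivAt a ⟪D t, w t⟫ t)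
    (hbal : ∀ t, |a t| = ‖w t‖) {s t : ℝ} (hst : s ≤ t) (hs : a s ≠ 0) : a t ≠ 0 := by
  obtain ⟨C, hC⟩ := isCompact_Icc.exists_bound_of_continuousOn (s := Icc s t) hD.continuousOn
  have hgrowth : a s ^ 2 * Real.exp (2 * C * s) ≤ a t ^ 2 * Real.exp (2 * C * t) := by
    refine mul_exp_le_mul_exp_of_neg_mul_le_deriv hst (f' := fun r => 2 * a r * ⟪D r, w r⟫)
      (fun r _ => ((ha r).fun_pow 2).congr_deriv (by ring)) fun r hr => ?_
    have := neg_mul_sq_le_mul_inner (hbal r) (hC r hr)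
    linarith
  intro ht
  rw [ht, zero_pow two_ne_zero, zero_mul] at hgrowth
  exact hgrowth.not_gt (by positivity)

end InnerProductSpace

/-- Preservation of balancedness and positivity: if `a' = ⟪D, w⟫`, `w' = a • D`,
and `a(0) = ‖w(0)‖ > 0`, then `a(t) = ‖w(t)‖ > 0` for all `t ≥ 0`. -/
theorem balanced_positive_preserved {d : ℕ}
    (a : ℝ → ℝ) (w : ℝ → EuclideanSpace ℝ (Fin d))
    (D : ℝ → EuclideanSpace ℝ (Fin d)) (hD : Continuous D)
    (ha : ∀ t, HasDerivAt a (⟪D t, w t⟫) t)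
    (hw : ∀ t, HasDerivAt w (a t • D t) t)
    (hbal : a 0 = ‖w 0‖) (hpos : 0 < a 0) :
    ∀ t ≥ (0 : ℝ), a t = ‖w t‖ ∧ 0 < a t := by
  have hbal' : ∀ t, |a t| = ‖w t‖ :=
    abs_eq_norm_of_abs_eq_norm ha hw (by rw [abs_of_pos hpos, hbal])
  intro t ht
  have hat : 0 < a t := by
    by_contra! hle
    obtain ⟨s, hs, has⟩ := intermediate_value_Icc' ht
      (Differentiable.continuous fun r => (ha r).differentiableAt).continuousOn ⟨hle, hpos.le⟩
    exact ne_zero_of_abs_eq_norm hD ha hbal' hs.1 hpos.ne' has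
  exact ⟨(abs_of_pos hat).symm.trans (hbal' t), hat⟩
end

section
/- Let f : [0,∞) → ℝ be differentiable with f'(t) ≥ a² - f(t)² for all t, where a > 0, and suppose 0 ≤ f(0) < a. Then for all t ≥ 0, f(t) ≥ a·tanh(a·t). -/
/-!
The difference `h = g - f` with `g t = a tanh (a t)` satisfies `h' ≤ f² - g² = -(f + g) h`, and
`f + g` is bounded below on each compact `[0, t]`, say by `m`. Thus `h' ≤ -m h` wherever `h > 0`,
while `h 0 = -f 0 ≤ 0`; a one-sided Grönwall argument then keeps `h ≤ 0`.
-/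

open Set

namespace Real

theorem hasDerivAt_tanh (x : ℝ) : HasDerivAt tanh (1 - tanh x ^ 2) x := by
  have hcosh := (cosh_pos x).ne'
  rw [show tanh = sinh / cosh from funext tanh_eq_sinh_div_cosh]
  refine ((hasDerivAt_sinh x).div (hasDerivAt_cosh x) hcosh).congr_deriv ?_
  simp only [Pi.div_apply]
  field_simp

theorem hasDerivAt_const_mul_tanh_const_mul (a x : ℝ) :
    HasDerivAt (fun t => a * tanh (a * t)) (a ^ 2 - (a * tanh (a * x)) ^ 2) x := by
  have h : HasDerivAt (fun t => a * tanh (a * t)) (a * ((1 - tanh (a * x) ^ 2) * (a * 1))) x :=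
    ((hasDerivAt_tanh (a * x)).comp x ((hasDerivAt_id x).const_mul a)).const_mul a
  exact h.congr_deriv (by ring)

end Real

theorem image_nonpos_of_deriv_right_le_const_mul_of_pos {h h' : ℝ → ℝ} {a b K : ℝ}
    (hc : ContinuousOn h (Icc a b)) (hd : ∀ x ∈ Ico a b, HasDerivWithinAt h (h' x) (Ici x) x)
    (ha : h a ≤ 0) (bound : ∀ x ∈ Ico a b, 0 < h x → h' x ≤ K * h x) :
    ∀ ⦃x⦄, x ∈ Icc a b → h x ≤ 0 := by
  intro x hx
  -- `h` can touch the barrier `ε exp((K + 1)(y - a)) > 0` only where it is positive, and there it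
  -- grows strictly slower than the barrier.
  have barrier : ∀ ε > 0, h x ≤ ε * Real.exp ((K + 1) * (x - a)) := by
    intro ε hε
    refine image_le_of_deriv_right_lt_deriv_boundary hc hd
      (B := fun y => ε * Real.exp ((K + 1) * (y - a))) (B' := fun y =>
      (K + 1) * (ε * Real.exp ((K + 1) * (y - a)))) (by simpa using ha.trans hε.le) (fun y => ?_)
      (fun y hy hhy => ?_) hx
    · have hB : HasDerivAt (fun y => ε * Real.exp ((K + 1) * (y - a)))
          (ε * (Real.exp ((K + 1) * (y - a)) * ((K + 1) * 1))) y :=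
        (((hasDerivAt_id y).sub_const a).const_mul (K + 1)).exp.const_mul ε
      exact hB.congr_deriv (by ring)
    · have hpos : 0 < ε * Real.exp ((K + 1) * (y - a)) := by positivity
      have := bound y hy (hhy ▸ hpos)
      rw [hhy] at this
      linarith
  refine le_of_forall_pos_le_add fun δ hδ => ?_
  have hC : 0 < Real.exp ((K + 1) * (x - a)) := Real.exp_pos _
  calc h x ≤ δ / Real.exp ((K + 1) * (x - a)) * Real.exp ((K + 1) * (x - a)) :=
        barrier _ (div_pos hδ hC)
    _ = 0 + δ := by rw [div_mul_cancel₀ _ hC.ne', zero_add]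

theorem tanh_comparison_general (a : ℝ) (f f' : ℝ → ℝ)
    (hderiv : ∀ t ≥ (0 : ℝ), HasDerivAt f (f' t) t)
    (hineq : ∀ t ≥ (0 : ℝ), f' t ≥ a ^ 2 - (f t) ^ 2)
    (h0 : 0 ≤ f 0) :
    ∀ t ≥ (0 : ℝ), f t ≥ a * Real.tanh (a * t) := by
  intro t ht
  set g : ℝ → ℝ := fun x => a * Real.tanh (a * x)
  have hg (x : ℝ) : HasDerivAt g (a ^ 2 - g x ^ 2) x :=
    Real.hasDerivAt_const_mul_tanh_const_mul a x
  have hgf (x : ℝ) (hx : x ∈ Icc 0 t) :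
      HasDerivAt (fun y => g y - f y) (a ^ 2 - g x ^ 2 - f' x) x :=
    (hg x).sub (hderiv x hx.1)
  obtain ⟨m, hm⟩ : BddBelow ((fun x => f x + g x) '' Icc 0 t) :=
    isCompact_Icc.bddBelow_image fun x hx =>
      ((hderiv x hx.1).add (hg x)).continuousAt.continuousWithinAt
  have hslow (x : ℝ) (hx : x ∈ Ico 0 t) (hpos : 0 < g x - f x) :
      a ^ 2 - g x ^ 2 - f' x ≤ -m * (g x - f x) :=
    calc a ^ 2 - g x ^ 2 - f' x ≤ f x ^ 2 - g x ^ 2 := by linarith [hineq x hx.1]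
      _ = -(f x + g x) * (g x - f x) := by ring
      _ ≤ -m * (g x - f x) :=
        mul_le_mul_of_nonneg_right (neg_le_neg (hm ⟨x, Ico_subset_Icc_self hx, rfl⟩)) hpos.le
  have hle := image_nonpos_of_deriv_right_le_const_mul_of_pos
    (fun x hx => (hgf x hx).continuousAt.continuousWithinAt)
    (fun x hx => (hgf x (Ico_subset_Icc_self hx)).hasDerivWithinAt)
    (by simpa [g] using h0) hslow (right_mem_Icc.2 ht)
  simpa [g] using hle

/-- Grönwall comparison with the tanh solution: if `f' ≥ a² - f²` on `[0,∞)`,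
`a > 0` and `0 ≤ f(0) < a`, then `f(t) ≥ a tanh(a t)` for all `t ≥ 0`. -/
theorem tanh_comparison (a : ℝ) (ha : 0 < a) (f f' : ℝ → ℝ)
    (hderiv : ∀ t ≥ (0 : ℝ), HasDerivAt f (f' t) t)
    (hineq : ∀ t ≥ (0 : ℝ), f' t ≥ a ^ 2 - (f t) ^ 2)
    (h0 : 0 ≤ f 0) (h0' : f 0 < a) :
    ∀ t ≥ (0 : ℝ), f t ≥ a * Real.tanh (a * t) :=
  tanh_comparison_general a f f' hderiv hineq h0
end

section
/- Let (x_k)_{k=1}^n be an orthonormal family in ℝ^d, y ∈ ℝⁿ with all y_k ≠ 0 and with at least one positive and one negative entry. Define D_+ = (1/n)Σ_{k: y_k>0} y_k x_k and D_- = (1/n)Σ_{k: y_k<0} y_k x_k. For m ≥ 2, consider the network θ = (a, W) with w_1 = √(n/‖D_+‖)·D_+, w_2 = -√(n/‖D_-‖)·D_-, w_j = 0 for j ≥ 3, and a_1 = √(n‖D_+‖), a_2 = -√(n‖D_-‖), a_j = 0 for j ≥ 3. Then h_θ(x_k) = y_k for all k, i.e. θ interpolates the data, and ‖θ‖² = 2n(‖D_+‖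 + ‖D_-‖). -/
open RealInnerProductSpace Finset

/-!
A neuron with `a = √(s‖v‖)` and `w = √(s/‖v‖) • v`, `s ≥ 0`, computes `s · ReLU ⟪v, ·⟫` by positive
homogeneity of ReLU, and costs `a² + ‖w‖² = 2 s ‖v‖`; both also hold for `v = 0`. By orthonormality
`n ⟪D₊, x k⟫ = ReLU (y k)` and `n ⟪-D₋, x k⟫ = ReLU (-y k)`, so the two neurons output
`ReLU (y k) - ReLU (-y k) = y k`.
-/

theorem Fin.sum_eq_add_of_forall_two_le {M : Type*} [AddCommMonoid M] {m : ℕ} (hm : 2 ≤ m)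
    (f : Fin m → M) (hf : ∀ j : Fin m, 2 ≤ (j : ℕ) → f j = 0) :
    ∑ j, f j = f ⟨0, by omega⟩ + f ⟨1, by omega⟩ := by
  obtain ⟨m, rfl⟩ := Nat.exists_eq_add_of_le' hm
  rw [Fin.sum_univ_succ, Fin.sum_univ_succ, Finset.sum_eq_zero fun j _ => hf _ (by simp),
    add_zero]
  rfl

theorem Orthonormal.inner_sum_filter_smul_left {ι : Type*} [Fintype ι] {E : Type*}
    [NormedAddCommGroup E] [InnerProductSpace ℝ E] {x : ι → E} (hx : Orthonormal ℝ x)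
    (p : ι → Prop) [DecidablePred p] (c : ι → ℝ) (i : ι) :
    ⟪∑ k ∈ univ.filter p, c k • x k, x i⟫ = if p i then c i else 0 := by
  classical
  simp only [sum_inner, real_inner_smul_left, orthonormal_iff_ite.mp hx, mul_boole,
    Finset.sum_ite_eq', mem_filter, mem_univ, true_and]

section BalancedNeuron

variable {E : Type*} [NormedAddCommGroup E] [InnerProductSpace ℝ E] {s : ℝ}

theorem sqrt_mul_norm_mul_max_zero_inner_sqrt_div_norm_smul (hs : 0 ≤ s) (v z : E) :
    √(s * ‖v‖) * max 0 ⟪√(s / ‖v‖) • v, z⟫ = s * max 0 ⟪v, z⟫ := by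
  rcases eq_or_ne v 0 with rfl | hv
  · simp
  have hv' : 0 < ‖v‖ := norm_pos_iff.mpr hv
  have hsqrt : √(s * ‖v‖) * √(s / ‖v‖) = s := by
    rw [← Real.sqrt_mul (by positivity), show s * ‖v‖ * (s / ‖v‖) = s * s by field_simp,
      Real.sqrt_mul_self hs]
  have hmax : max 0 (√(s / ‖v‖) * ⟪v, z⟫) = √(s / ‖v‖) * max 0 ⟪v, z⟫ := by
    rw [mul_max_of_nonneg _ _ (Real.sqrt_nonneg _), mul_zero]
  rw [real_inner_smul_left, hmax, ← mul_assoc, hsqrt]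

theorem sqrt_mul_norm_sq_add_norm_sqrt_div_norm_smul_sq (hs : 0 ≤ s) (v : E) :
    √(s * ‖v‖) ^ 2 + ‖√(s / ‖v‖) • v‖ ^ 2 = 2 * s * ‖v‖ := by
  rcases eq_or_ne v 0 with rfl | hv
  · simp
  have hv' : 0 < ‖v‖ := norm_pos_iff.mpr hv
  rw [norm_smul, mul_pow, Real.norm_eq_abs, sq_abs, Real.sq_sqrt (by positivity),
    Real.sq_sqrt (by positivity)]
  field_simp
  ring

end BalancedNeuron

theorem two_neuron_interpolator_general {d n m : ℕ}
    (x : Fin n → EuclideanSpace ℝ (Fin d)) (y : Fin n → ℝ)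
    (hortho : ∀ k k', ⟪x k, x k'⟫ = if k = k' then (1 : ℝ) else 0)
    (hm : 2 ≤ m)
    (Dp Dm : EuclideanSpace ℝ (Fin d))
    (hDp : Dp = (1 / (n : ℝ)) • ∑ k ∈ univ.filter (fun k => 0 < y k), y k • x k)
    (hDm : Dm = (1 / (n : ℝ)) • ∑ k ∈ univ.filter (fun k => y k < 0), y k • x k)
    (a : Fin m → ℝ) (w : Fin m → EuclideanSpace ℝ (Fin d))
    (hw0 : ∀ j : Fin m, (j : ℕ) = 0 → w j = Real.sqrt ((n : ℝ) / ‖Dp‖) • Dp)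
    (hw1 : ∀ j : Fin m, (j : ℕ) = 1 → w j = -(Real.sqrt ((n : ℝ) / ‖Dm‖)) • Dm)
    (hwj : ∀ j : Fin m, 2 ≤ (j : ℕ) → w j = 0)
    (ha0 : ∀ j : Fin m, (j : ℕ) = 0 → a j = Real.sqrt ((n : ℝ) * ‖Dp‖))
    (ha1 : ∀ j : Fin m, (j : ℕ) = 1 → a j = -Real.sqrt ((n : ℝ) * ‖Dm‖))
    (haj : ∀ j : Fin m, 2 ≤ (j : ℕ) → a j = 0) :
    (∀ k, ∑ j, a j * max 0 ⟪w j, x k⟫ = y k) ∧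
    (∑ j, (a j) ^ 2) + (∑ j, ‖w j‖ ^ 2) = 2 * n * (‖Dp‖ + ‖Dm‖) := by
  have hx : Orthonormal ℝ x := orthonormal_iff_ite.mpr hortho
  have hDp_inner (k : Fin n) : ⟪Dp, x k⟫ = max 0 (y k) / n := by
    rw [hDp, real_inner_smul_left, hx.inner_sum_filter_smul_left]
    split_ifs with hk
    · rw [max_eq_right hk.le, one_div_mul_eq_div]
    · rw [max_eq_left (not_lt.mp hk), mul_zero, zero_div]
  have hDm_inner (k : Fin n) : ⟪-Dm, x k⟫ = max 0 (-y k) / n := by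
    rw [hDm, inner_neg_left, real_inner_smul_left, hx.inner_sum_filter_smul_left]
    split_ifs with hk
    · rw [max_eq_right (neg_nonneg.mpr hk.le)]; ring
    · rw [max_eq_left (neg_nonpos.mpr (not_lt.mp hk))]; ring
  have hw1' : w ⟨1, hm⟩ = √(n / ‖-Dm‖) • -Dm := by
    rw [hw1 _ rfl, norm_neg, neg_smul, smul_neg]
  have ha1' : a ⟨1, hm⟩ = -√(n * ‖-Dm‖) := by rw [ha1 _ rfl, norm_neg]
  refine ⟨fun k => ?_, ?_⟩
  · have hn : (n : ℝ) ≠ 0 := Nat.cast_ne_zero.mpr (Fin.pos k).ne'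
    rw [Fin.sum_eq_add_of_forall_two_le hm _ fun j hj => by rw [haj j hj, zero_mul],
      hw0 _ rfl, ha0 _ rfl, hw1', ha1', neg_mul,
      sqrt_mul_norm_mul_max_zero_inner_sqrt_div_norm_smul n.cast_nonneg,
      sqrt_mul_norm_mul_max_zero_inner_sqrt_div_norm_smul n.cast_nonneg, hDp_inner,
      hDm_inner, max_eq_right (div_nonneg (le_max_left 0 (y k)) n.cast_nonneg),
      max_eq_right (div_nonneg (le_max_left 0 (-y k)) n.cast_nonneg), mul_div_cancel₀ _ hn,
      mul_div_cancel₀ _ hn, ← sub_eq_add_neg]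
    rw [max_comm, max_comm 0]
    exact posPart_sub_negPart (y k)
  · rw [Fin.sum_eq_add_of_forall_two_le hm _ fun j hj => by rw [haj j hj, zero_pow two_ne_zero],
      Fin.sum_eq_add_of_forall_two_le hm _ fun j hj => by
        rw [hwj j hj, norm_zero, zero_pow two_ne_zero],
      hw0 _ rfl, ha0 _ rfl, hw1', ha1', neg_sq, add_add_add_comm,
      sqrt_mul_norm_sq_add_norm_sqrt_div_norm_smul_sq n.cast_nonneg,
      sqrt_mul_norm_sq_add_norm_sqrt_div_norm_smul_sq n.cast_nonneg, norm_neg]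
    ring

/-- The explicit two-neuron network built from `D₊` and `D₋` interpolates the
data and has squared norm `2n(‖D₊‖ + ‖D₋‖)`. -/
theorem two_neuron_interpolator {d n m : ℕ}
    (x : Fin n → EuclideanSpace ℝ (Fin d)) (y : Fin n → ℝ)
    (hortho : ∀ k k', ⟪x k, x k'⟫ = if k = k' then (1 : ℝ) else 0)
    (hy : ∀ k, y k ≠ 0)
    (hpos : ∃ k, 0 < y k) (hneg : ∃ k, y k < 0)
    (hn : 0 < n) (hm : 2 ≤ m)
    (Dp Dm : EuclideanSpace ℝ (Fin d))
    (hDp : Dp = (1 / (n : ℝ)) • ∑ k ∈ univ.filter (fun k => 0 < y k), y k • x k)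
    (hDm : Dm = (1 / (n : ℝ)) • ∑ k ∈ univ.filter (fun k => y k < 0), y k • x k)
    (a : Fin m → ℝ) (w : Fin m → EuclideanSpace ℝ (Fin d))
    (hw0 : ∀ j : Fin m, (j : ℕ) = 0 → w j = Real.sqrt ((n : ℝ) / ‖Dp‖) • Dp)
    (hw1 : ∀ j : Fin m, (j : ℕ) = 1 → w j = -(Real.sqrt ((n : ℝ) / ‖Dm‖)) • Dm)
    (hwj : ∀ j : Fin m, 2 ≤ (j : ℕ) → w j = 0)
    (ha0 : ∀ j : Fin m, (j : ℕ) = 0 → a j = Real.sqrt ((n : ℝ) * ‖Dp‖))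
    (ha1 : ∀ j : Fin m, (j : ℕ) = 1 → a j = -Real.sqrt ((n : ℝ) * ‖Dm‖))
    (haj : ∀ j : Fin m, 2 ≤ (j : ℕ) → a j = 0) :
    (∀ k, ∑ j, a j * max 0 ⟪w j, x k⟫ = y k) ∧
    (∑ j, (a j) ^ 2) + (∑ j, ‖w j‖ ^ 2) = 2 * n * (‖Dp‖ + ‖Dm‖) :=
  two_neuron_interpolator_general x y hortho hm Dp Dm hDp hDm a w hw0 hw1 hwj ha0 ha1 haj
end

section
/- With orthonormal inputs (x_k) and labels y with all y_k ≠ 0 and both signs present, any balanced interpolating network θ = (a, W) (i.e. L(θ) = 0 and |a_j| = ‖w_j‖ for all j) satisfies ‖θ‖² ≥ 2n(‖D_+‖ + ‖D_-‖), where D_± are as before. Consequently the minimum of ‖θ‖² over interpolating networks equals 2n(‖D_+‖ + ‖D_-‖) = 2√(Σ_{k: y_k>0} y_k²) + 2√(Σ_{k: y_k<0} y_k²). -/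
open RealInnerProductSpace Finset

/-! Write `S₊ = Σ_{y_k>0} y_k²`. Pairing the interpolation equations on `{y_k > 0}` with the
targets themselves gives `S₊ = Σ_j a_j Σ_{y_k>0} y_k ReLU⟪w_j, x_k⟫`. Each inner sum is
nonnegative and, by Cauchy–Schwarz and Bessel's inequality, at most `√S₊ ‖w_j‖`; hence
`√S₊ ≤ Σ_j (a_j)⁺ ‖w_j‖`. Symmetrically `√S₋ ≤ Σ_j (a_j)⁻ ‖w_j‖`, and adding the two gives
`√S₊ + √S₋ ≤ Σ_j |a_j| ‖w_j‖`, which for a balanced network is half of `‖θ‖²`. Finally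
orthonormality gives `n ‖D_±‖ = √S_±`. -/

section

variable {E ι : Type*} [NormedAddCommGroup E] [InnerProductSpace ℝ E] {x : ι → E}

theorem Orthonormal.norm_sum_smul_sq (hx : Orthonormal ℝ x) (c : ι → ℝ) (s : Finset ι) :
    ‖∑ k ∈ s, c k • x k‖ ^ 2 = ∑ k ∈ s, c k ^ 2 := by
  rw [← real_inner_self_eq_norm_sq, hx.inner_sum]
  simp [sq]

theorem sq_max_zero_le (t : ℝ) : max 0 t ^ 2 ≤ t ^ 2 := by
  rcases le_total t 0 with h | h <;> simp [h, sq_nonneg]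

theorem Orthonormal.sum_mul_max_zero_inner_le (hx : Orthonormal ℝ x) (c : ι → ℝ)
    (s : Finset ι) (w : E) :
    ∑ k ∈ s, c k * max 0 ⟪w, x k⟫ ≤ √(∑ k ∈ s, c k ^ 2) * ‖w‖ := by
  have bessel : ∑ k ∈ s, max 0 ⟪w, x k⟫ ^ 2 ≤ ‖w‖ ^ 2 := calc
    _ ≤ ∑ k ∈ s, ‖⟪x k, w⟫‖ ^ 2 := sum_le_sum fun k _ => by
          rw [Real.norm_eq_abs, sq_abs, real_inner_comm]; exact sq_max_zero_le _
    _ ≤ ‖w‖ ^ 2 := hx.sum_inner_products_le w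
  calc _ ≤ √(∑ k ∈ s, c k ^ 2) * √(∑ k ∈ s, max 0 ⟪w, x k⟫ ^ 2) :=
        Real.sum_mul_le_sqrt_mul_sqrt _ _ _
    _ ≤ √(∑ k ∈ s, c k ^ 2) * ‖w‖ := by
        gcongr
        exact (Real.sqrt_le_sqrt bessel).trans_eq (Real.sqrt_sq (norm_nonneg w))

theorem Orthonormal.sqrt_sum_sq_le_sum_posPart_mul_norm {J : Type*} [Fintype J]
    (hx : Orthonormal ℝ x) {s : Finset ι} {c : ι → ℝ} (hc : ∀ k ∈ s, 0 ≤ c k)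
    (b : J → ℝ) (w : J → E) (hfit : ∀ k ∈ s, ∑ j, b j * max 0 ⟪w j, x k⟫ = c k) :
    √(∑ k ∈ s, c k ^ 2) ≤ ∑ j, (b j)⁺ * ‖w j‖ := by
  set S := ∑ k ∈ s, c k ^ 2
  have hS : S = ∑ j, b j * ∑ k ∈ s, c k * max 0 ⟪w j, x k⟫ := calc
    S = ∑ k ∈ s, c k * ∑ j, b j * max 0 ⟪w j, x k⟫ :=
        sum_congr rfl fun k hk => by rw [hfit k hk, sq]
    _ = _ := by
        simp_rw [mul_sum]
        rw [sum_comm]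
        exact sum_congr rfl fun j _ => sum_congr rfl fun k _ => by ring
  have hle : S ≤ √S * ∑ j, (b j)⁺ * ‖w j‖ := by
    refine hS.trans_le ?_
    rw [mul_sum]
    refine sum_le_sum fun j _ => ?_
    have hT : 0 ≤ ∑ k ∈ s, c k * max 0 ⟪w j, x k⟫ :=
      sum_nonneg fun k hk => mul_nonneg (hc k hk) (le_max_left _ _)
    calc _ ≤ (b j)⁺ * ∑ k ∈ s, c k * max 0 ⟪w j, x k⟫ :=
          mul_le_mul_of_nonneg_right (le_posPart _) hT
      _ ≤ (b j)⁺ * (√S * ‖w j‖) :=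
          mul_le_mul_of_nonneg_left (hx.sum_mul_max_zero_inner_le c s (w j)) (posPart_nonneg _)
      _ = √S * ((b j)⁺ * ‖w j‖) := by ring
  have hR : 0 ≤ ∑ j, (b j)⁺ * ‖w j‖ := by positivity
  nlinarith [Real.sq_sqrt (show 0 ≤ S by positivity), Real.sqrt_nonneg S]

end

theorem minimal_norm_lower_bound_general {d n m : ℕ}
    (x : Fin n → EuclideanSpace ℝ (Fin d)) (y : Fin n → ℝ)
    (hortho : ∀ k k', ⟪x k, x k'⟫ = if k = k' then (1 : ℝ) else 0)
    (hn : 0 < n)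
    (Dp Dm : EuclideanSpace ℝ (Fin d))
    (hDp : Dp = (1 / (n : ℝ)) • ∑ k ∈ univ.filter (fun k => 0 < y k), y k • x k)
    (hDm : Dm = (1 / (n : ℝ)) • ∑ k ∈ univ.filter (fun k => y k < 0), y k • x k)
    (a : Fin m → ℝ) (w : Fin m → EuclideanSpace ℝ (Fin d))
    (hbal : ∀ j, |a j| = ‖w j‖)
    (hinterp : ∀ k, ∑ j, a j * max 0 ⟪w j, x k⟫ = y k) :
    (∑ j, (a j) ^ 2) + (∑ j, ‖w j‖ ^ 2) ≥ 2 * n * (‖Dp‖ + ‖Dm‖) ∧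
    2 * n * (‖Dp‖ + ‖Dm‖) =
      2 * Real.sqrt (∑ k ∈ univ.filter (fun k => 0 < y k), (y k) ^ 2) +
      2 * Real.sqrt (∑ k ∈ univ.filter (fun k => y k < 0), (y k) ^ 2) := by
  have hx : Orthonormal ℝ x := orthonormal_iff_ite.mpr hortho
  have hnorm (s : Finset (Fin n)) : ‖∑ k ∈ s, y k • x k‖ = √(∑ k ∈ s, y k ^ 2) := by
    rw [← hx.norm_sum_smul_sq, Real.sqrt_sq (norm_nonneg _)]
  have hscale (v : EuclideanSpace ℝ (Fin d)) : (n : ℝ) * ‖(1 / (n : ℝ)) • v‖ = ‖v‖ := by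
    rw [norm_smul, Real.norm_of_nonneg (by positivity), ← mul_assoc,
      mul_one_div_cancel (Nat.cast_ne_zero.2 hn.ne'), one_mul]
  have hconst : 2 * n * (‖Dp‖ + ‖Dm‖) = 2 * √(∑ k ∈ univ.filter (fun k => 0 < y k), y k ^ 2) +
      2 * √(∑ k ∈ univ.filter (fun k => y k < 0), y k ^ 2) := by
    rw [mul_assoc, mul_add, hDp, hDm, hscale, hscale, hnorm, hnorm, mul_add]
  have hplus := hx.sqrt_sum_sq_le_sum_posPart_mul_norm (s := univ.filter (fun k => 0 < y k))
    (fun k hk => (mem_filter.1 hk).2.le) a w (fun k _ => hinterp k)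
  have hminus := hx.sqrt_sum_sq_le_sum_posPart_mul_norm (s := univ.filter (fun k => y k < 0))
    (c := fun k => -y k) (fun k hk => neg_nonneg.2 (mem_filter.1 hk).2.le) (fun j => -a j) w
    (fun k _ => by simp only [neg_mul, sum_neg_distrib, hinterp])
  simp only [neg_sq] at hminus
  have hbalanced : ∑ j, (a j)⁺ * ‖w j‖ + ∑ j, (-a j)⁺ * ‖w j‖ = ∑ j, a j ^ 2 := by
    rw [← sum_add_distrib]
    refine sum_congr rfl fun j _ => ?_
    rw [← add_mul, posPart_neg, posPart_add_negPart, ← hbal j, ← sq_abs, sq]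
  have hw : ∑ j, ‖w j‖ ^ 2 = ∑ j, a j ^ 2 := sum_congr rfl fun j _ => by rw [← hbal j, sq_abs]
  refine ⟨?_, hconst⟩
  rw [hconst, hw]
  linarith

/-- Any balanced interpolating one-hidden-layer ReLU network over orthonormal
data has squared parameter norm at least `2n(‖D₊‖ + ‖D₋‖)`, and this constant
equals `2√(Σ_{y_k>0} y_k²) + 2√(Σ_{y_k<0} y_k²)`. -/
theorem minimal_norm_lower_bound {d n m : ℕ}
    (x : Fin n → EuclideanSpace ℝ (Fin d)) (y : Fin n → ℝ)
    (hortho : ∀ k k', ⟪x k, x k'⟫ = if k = k' then (1 : ℝ) else 0)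
    (hy : ∀ k, y k ≠ 0)
    (hpos : ∃ k, 0 < y k) (hneg : ∃ k, y k < 0)
    (hn : 0 < n)
    (Dp Dm : EuclideanSpace ℝ (Fin d))
    (hDp : Dp = (1 / (n : ℝ)) • ∑ k ∈ univ.filter (fun k => 0 < y k), y k • x k)
    (hDm : Dm = (1 / (n : ℝ)) • ∑ k ∈ univ.filter (fun k => y k < 0), y k • x k)
    (a : Fin m → ℝ) (w : Fin m → EuclideanSpace ℝ (Fin d))
    (hbal : ∀ j, |a j| = ‖w j‖)
    (hinterp : ∀ k, ∑ j, a j * max 0 ⟪w j, x k⟫ = y k) :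
    (∑ j, (a j) ^ 2) + (∑ j, ‖w j‖ ^ 2) ≥ 2 * n * (‖Dp‖ + ‖Dm‖) ∧
    2 * n * (‖Dp‖ + ‖Dm‖) =
      2 * Real.sqrt (∑ k ∈ univ.filter (fun k => 0 < y k), (y k) ^ 2) +
      2 * Real.sqrt (∑ k ∈ univ.filter (fun k => y k < 0), (y k) ^ 2) :=
  minimal_norm_lower_bound_general x y hortho hn Dp Dm hDp hDm a w hbal hinterp
end

section
/- Let L : ℝ^N → [0,∞) be continuously differentiable, θ₀ ∈ ℝ^N, r > 0, and suppose inf_{θ ∈ B(θ₀, r)} ‖∇L(θ)‖²/L(θ) ≥ L(θ₀)/r² · 4 (with the convention that the quotient is +∞ when L(θ) = 0). Then the gradient flow θ(t) started at θ₀ remains in B(θ₀, r) for all time and L(θ(t)) → 0 as t → ∞; moreover L(θ(t)) ≤ L(θ₀)·e^{-μt} where μ = inf_{B(θ₀,r)} ‖∇L‖²/L. -/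
/-!
Along the flow `d/dt L(θ t) = -‖∇L(θ t)‖²`. While the flow stays in the ball and the loss is
positive, the PL inequality `√(μ L) ≤ ‖∇L‖` turns this into
`‖θ'‖ = ‖∇L‖ ≤ ‖∇L‖² / √(μ L) = -(2 / √μ) d/dt √L`, so the distance travelled is less than
`(2 / √μ) √L(θ₀) ≤ r`; once the loss vanishes the flow sits at a global minimum and stops.
Hence it never leaves the ball, and there `d/dt L ≤ -μ L` gives exponential decay by Grönwall.
-/

open Filter Metric Set Topology

theorem Continuous.forall_ge_mem_of_eventually_mem {X : Type*} [TopologicalSpace X]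
    {γ : ℝ → X} {K : Set X} {a : ℝ} (hγ : Continuous γ) (hK : IsClosed K) (ha : γ a ∈ K)
    (hstep : ∀ T, a ≤ T → (∀ u ∈ Icc a T, γ u ∈ K) → ∀ᶠ u in 𝓝[>] T, γ u ∈ K) :
    ∀ t, a ≤ t → γ t ∈ K := by
  by_contra! ⟨t₁, hat₁, ht₁⟩
  set S := {t | a ≤ t ∧ γ t ∉ K}
  have hS : S.Nonempty := ⟨t₁, hat₁, ht₁⟩
  have hSbdd : BddBelow S := ⟨a, fun t ht => ht.1⟩
  set T := sInf S
  have haT : a ≤ T := le_csInf hS fun t ht => ht.1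
  have hbefore : ∀ u ∈ Ico a T, γ u ∈ K := fun u hu =>
    by_contra fun h => (csInf_le hSbdd ⟨hu.1, h⟩).not_gt hu.2
  have hT : γ T ∈ K := by
    rcases haT.eq_or_lt with haT | haT
    · rwa [← haT]
    · refine hK.mem_of_tendsto ((hγ.tendsto T).mono_left (nhdsWithin_le_nhds (s := Iio T))) ?_
      filter_upwards [Ioo_mem_nhdsLT haT] with u hu using hbefore u ⟨hu.1.le, hu.2⟩
  have hupto : ∀ u ∈ Icc a T, γ u ∈ K := fun u hu =>
    hu.2.eq_or_lt.elim (fun h => h ▸ hT) fun h => hbefore u ⟨hu.1, h⟩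
  obtain ⟨b, hTb, hgood⟩ := mem_nhdsGT_iff_exists_Ioo_subset.1 (hstep T haT hupto)
  obtain ⟨t₂, ⟨hat₂, ht₂⟩, ht₂b⟩ := exists_lt_of_csInf_lt hS hTb
  have hTt₂ : T < t₂ :=
    (csInf_le hSbdd ⟨hat₂, ht₂⟩).lt_of_ne fun h => ht₂ (h ▸ hT)
  exact ht₂ (hgood ⟨hTt₂, ht₂b⟩)

theorem two_div_sqrt_mul_sqrt_le {μ ℓ r : ℝ} (hμ : 0 < μ) (hr : 0 ≤ r)
    (h : 4 * ℓ ≤ μ * r ^ 2) : 2 / √μ * √ℓ ≤ r := by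
  have key : √(4 * ℓ) ≤ √(μ * r ^ 2) := Real.sqrt_le_sqrt h
  rw [Real.sqrt_mul (by norm_num), Real.sqrt_mul hμ.le, Real.sqrt_sq hr,
    show (4 : ℝ) = 2 ^ 2 by norm_num, Real.sqrt_sq (by norm_num)] at key
  rw [div_mul_eq_mul_div, div_le_iff₀ (Real.sqrt_pos.2 hμ)]
  linarith

variable {E : Type*} [NormedAddCommGroup E] [InnerProductSpace ℝ E] [CompleteSpace E]

def IsGradientFlow (L : E → ℝ) (θ : ℝ → E) : Prop :=
  ∀ t, HasDerivAt θ (-gradient L (θ t)) t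

namespace IsGradientFlow

variable {L : E → ℝ} {θ : ℝ → E}

theorem continuous (hθ : IsGradientFlow L θ) : Continuous θ :=
  continuous_iff_continuousAt.2 fun t => (hθ t).continuousAt

theorem hasDerivAt_loss (hθ : IsGradientFlow L θ) {t : ℝ} (hL : DifferentiableAt ℝ L (θ t)) :
    HasDerivAt (fun t => L (θ t)) (-‖gradient L (θ t)‖ ^ 2) t := by
  have := hL.hasGradientAt.hasFDerivAt.comp_hasDerivAt t (hθ t)
  rwa [InnerProductSpace.toDual_apply_apply, inner_neg_right,
    real_inner_self_eq_norm_sq] at this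

theorem antitone_loss (hθ : IsGradientFlow L θ) (hL : Differentiable ℝ L) :
    Antitone fun t => L (θ t) :=
  antitone_of_hasDerivAt_nonpos (fun t => hθ.hasDerivAt_loss (hL (θ t)))
    fun _ => neg_nonpos.2 (sq_nonneg _)

theorem eq_of_forall_le (hθ : IsGradientFlow L θ) (hL : Differentiable ℝ L) {T : ℝ}
    (hmin : ∀ x, L (θ T) ≤ L x) {t : ℝ} (hTt : T ≤ t) : θ t = θ T := by
  have hstat : ∀ u, T ≤ u → gradient L (θ u) = 0 := fun u hu => by
    have hmin_u : IsLocalMin L (θ u) := Eventually.of_forall fun x =>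
      (hθ.antitone_loss hL hu).trans (hmin x)
    simp [gradient, hmin_u.fderiv_eq_zero]
  refine constant_of_has_deriv_right_zero hθ.continuous.continuousOn (fun u hu => ?_) t
    ⟨hTt, le_rfl⟩
  simpa [hstat u hu.1] using (hθ u).hasDerivWithinAt (s := Ici u)

theorem dist_le_of_PL (hθ : IsGradientFlow L θ) (hL : Differentiable ℝ L) {μ a b : ℝ}
    (hμ : 0 < μ) (hab : a ≤ b) (hb : 0 < L (θ b))
    (hPL : ∀ t ∈ Ico a b, μ * L (θ t) ≤ ‖gradient L (θ t)‖ ^ 2) :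
    dist (θ b) (θ a) ≤ 2 / √μ * (√(L (θ a)) - √(L (θ b))) := by
  have hpos : ∀ t ∈ Icc a b, 0 < L (θ t) := fun t ht =>
    hb.trans_le (hθ.antitone_loss hL ht.2)
  have hsqrt : ∀ t ∈ Icc a b, HasDerivAt (fun t => 2 / √μ * (√(L (θ a)) - √(L (θ t))))
      (‖gradient L (θ t)‖ ^ 2 / (√μ * √(L (θ t)))) t := fun t ht => by
    refine ((((hθ.hasDerivAt_loss (hL (θ t))).sqrt (hpos t ht).ne').const_sub
      (√(L (θ a)))).const_mul (2 / √μ)).congr_deriv ?_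
    field_simp
  have hspeed : ∀ t ∈ Ico a b,
      ‖-gradient L (θ t)‖ ≤ ‖gradient L (θ t)‖ ^ 2 / (√μ * √(L (θ t))) := fun t ht => by
    have hcpos : 0 < √μ * √(L (θ t)) :=
      mul_pos (Real.sqrt_pos.2 hμ) (Real.sqrt_pos.2 (hpos t (Ico_subset_Icc_self ht)))
    have hc : √μ * √(L (θ t)) ≤ ‖gradient L (θ t)‖ := by
      rw [← Real.sqrt_mul hμ.le]
      exact Real.sqrt_le_iff.2 ⟨norm_nonneg _, hPL t ht⟩
    rw [norm_neg, le_div_iff₀ hcpos]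
    nlinarith
  have := image_norm_le_of_norm_deriv_right_le_deriv_boundary'
    (f := fun t => θ t - θ a) (hθ.continuous.sub continuous_const).continuousOn
    (fun t _ => ((hθ t).sub_const (θ a)).hasDerivWithinAt) (by simp)
    (HasDerivAt.continuousOn fun t ht => hsqrt t ht)
    (fun t ht => (hsqrt t (Ico_subset_Icc_self ht)).hasDerivWithinAt) hspeed ⟨hab, le_rfl⟩
  rwa [dist_eq_norm]

theorem loss_le_mul_exp (hθ : IsGradientFlow L θ) (hL : Differentiable ℝ L) {μ a b : ℝ}
    (hPL : ∀ t ∈ Ico a b, μ * L (θ t) ≤ ‖gradient L (θ t)‖ ^ 2) :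
    ∀ t ∈ Icc a b, L (θ t) ≤ L (θ a) * Real.exp (-μ * (t - a)) := by
  intro t ht
  have := le_gronwallBound_of_liminf_deriv_right_le (f := fun t => L (θ t)) (ε := 0) (K := -μ)
    (hL.continuous.comp hθ.continuous).continuousOn
    (fun u _ _ hr => (hθ.hasDerivAt_loss (hL (θ u))).hasDerivWithinAt.liminf_right_slope_le hr)
    le_rfl (fun u hu => by linarith [hPL u hu]) t ht
  rwa [gronwallBound_ε0] at this

theorem mem_closedBall_of_PL (hθ : IsGradientFlow L θ) (hL : Differentiable ℝ L)
    (hLpos : ∀ x, 0 ≤ L x) {μ r : ℝ} (hμ : 0 < μ) (hr : 0 ≤ r)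
    (hPL : ∀ x ∈ closedBall (θ 0) r, μ * L x ≤ ‖gradient L x‖ ^ 2)
    (hinit : 4 * L (θ 0) ≤ μ * r ^ 2) :
    ∀ t, 0 ≤ t → θ t ∈ closedBall (θ 0) r := by
  refine hθ.continuous.forall_ge_mem_of_eventually_mem isClosed_closedBall
    (mem_closedBall_self hr) fun T hT hupto => ?_
  rcases (hLpos (θ T)).eq_or_lt with hzero | hpos
  · filter_upwards [self_mem_nhdsWithin] with u hu
    rw [hθ.eq_of_forall_le hL (fun x => hzero ▸ hLpos x) (le_of_lt hu)]
    exact hupto T ⟨hT, le_rfl⟩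
  · have hinside : θ T ∈ ball (θ 0) r := by
      have hlen := hθ.dist_le_of_PL hL hμ hT hpos fun t ht =>
        hPL _ (hupto t (Ico_subset_Icc_self ht))
      have hradius := two_div_sqrt_mul_sqrt_le hμ hr hinit
      have hgain : 0 < 2 / √μ * √(L (θ T)) := by positivity
      rw [mem_ball]
      linarith
    have hnear : ∀ᶠ u in 𝓝 T, θ u ∈ ball (θ 0) r :=
      hθ.continuous.continuousAt.eventually_mem (isOpen_ball.mem_nhds hinside)
    exact (eventually_nhdsWithin_of_eventually_nhds hnear).mono fun u hu =>
      ball_subset_closedBall hu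

end IsGradientFlow

/-- Local PL condition implies the gradient flow stays in the ball and the loss
converges to zero exponentially fast (after Chatterjee, 2022). -/
theorem local_PL_implies_convergence {N : ℕ}
    (L : EuclideanSpace ℝ (Fin N) → ℝ)
    (hL : ContDiff ℝ 1 L) (hLpos : ∀ θ, 0 ≤ L θ)
    (θ₀ : EuclideanSpace ℝ (Fin N)) (r : ℝ) (hr : 0 < r)
    (μ : ℝ) (hμ : 0 < μ)
    (hPL : ∀ θ' ∈ closedBall θ₀ r, μ * L θ' ≤ ‖gradient L θ'‖ ^ 2)
    (hinit : 4 * L θ₀ ≤ μ * r ^ 2)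
    (θ : ℝ → EuclideanSpace ℝ (Fin N))
    (hflow : ∀ t, HasDerivAt θ (-gradient L (θ t)) t)
    (h0 : θ 0 = θ₀) :
    (∀ t ≥ (0 : ℝ), θ t ∈ closedBall θ₀ r) ∧
    Tendsto (fun t => L (θ t)) atTop (nhds 0) ∧
    (∀ t ≥ (0 : ℝ), L (θ t) ≤ L θ₀ * Real.exp (-μ * t)) := by
  subst h0
  have hθ : IsGradientFlow L θ := hflow
  have hLd : Differentiable ℝ L := hL.differentiable one_ne_zero
  have hball := hθ.mem_closedBall_of_PL hLd hLpos hμ hr.le hPL hinit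
  have hdecay : ∀ t ≥ (0 : ℝ), L (θ t) ≤ L (θ 0) * Real.exp (-μ * t) := fun t ht => by
    simpa using hθ.loss_le_mul_exp hLd (fun u hu => hPL _ (hball u hu.1)) t ⟨ht, le_rfl⟩
  have hbound : Tendsto (fun t => L (θ 0) * Real.exp (-μ * t)) atTop (nhds 0) := by
    simpa using (Real.tendsto_exp_neg_atTop_nhds_zero.comp
      (tendsto_id.const_mul_atTop hμ)).const_mul (L (θ 0))
  exact ⟨hball, squeeze_zero' (.of_forall fun t => hLpos (θ t))
    ((eventually_ge_atTop 0).mono hdecay) hbound, hdecay⟩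
end
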